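/- arXiv:2006.10277 — 3 statements merged into one kernel-verified Lean document; each statement's English description precedes it below -/
import Mathlib

section
/- Let M and N be positive definite k×k real matrices with M - N positive definite (M ≻ N ≻ 0). Then for every nonzero vector v, (vᵀMv)/(vᵀNv) ≤ det(M)/det(N). -/
/-!
With `A = N^{-1/2} M N^{-1/2}` the hypothesis `N ≤ M` becomes `1 ≤ A` in the Loewner order, so
every eigenvalue of `A` is at least `1` and hence at most the product of all of them,
`det A = det M / det N`. Thus `A ≤ det A • 1`, and conjugating back gives
`M ≤ (det M / det N) • N`; evaluating both quadratic forms at `v` yields the bound.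
-/

open Matrix CFC Ring
open scoped MatrixOrder

namespace Matrix

variable {n : Type*} [Fintype n]

lemma dotProduct_mulVec_le_of_le {A B : Matrix n n ℝ} (h : A ≤ B) (v : n → ℝ) :
    v ⬝ᵥ A *ᵥ v ≤ v ⬝ᵥ B *ᵥ v := by
  simpa [sub_mulVec, dotProduct_sub] using (le_iff.1 h).dotProduct_mulVec_nonneg v

variable [DecidableEq n]

lemma IsHermitian.eigenvalues_le_det {A : Matrix n n ℝ} (hA : A.IsHermitian)
    (h1 : ∀ i, 1 ≤ hA.eigenvalues i) (i : n) : hA.eigenvalues i ≤ A.det := by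
  rw [hA.det_eq_prod_eigenvalues, Finset.prod_eq_multiset_prod]
  exact Multiset.mem_le_prod_of_one_le h1 (Finset.mem_univ_val i)

lemma le_det_smul_one_of_one_le {A : Matrix n n ℝ} (h : 1 ≤ A) : A ≤ A.det • 1 := by
  have hA : A.IsHermitian := (IsSelfAdjoint.one _ |>.of_ge h).isHermitian
  rw [← Algebra.algebraMap_eq_smul_one, le_algebraMap_iff_spectrum_le hA.isSelfAdjoint]
  rw [CFC.one_le_iff (R := ℝ) A hA.isSelfAdjoint] at h
  simp only [hA.spectrum_real_eq_range_eigenvalues, Set.forall_mem_range] at h ⊢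
  exact hA.eigenvalues_le_det h

lemma det_conjSqrt {𝕜 : Type*} [RCLike 𝕜] {C : Matrix n n 𝕜} (hC : 0 ≤ C) (A : Matrix n n 𝕜) :
    (conjSqrt C A).det = C.det * A.det := by
  rw [conjSqrt_apply, det_mul, det_mul, mul_right_comm, ← det_mul, sqrt_mul_sqrt_self C hC]

lemma le_det_div_det_smul_of_le {M N : Matrix n n ℝ} (hN : N.PosDef) (hNM : N ≤ M) :
    M ≤ (M.det / N.det) • N := by
  set A := conjSqrt N⁻¹ʳ M
  have hN' : IsStrictlyPositive N := hN.isStrictlyPositive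
  have hM : conjSqrt N A = M := conjSqrt_conjSqrt_ringInverse N M
  have h1 : 1 ≤ A := conjSqrt_ringInverse_self N ▸ conjSqrt_le_conjSqrt hNM
  have hdet : M.det / N.det = A.det := by
    rw [← hM, det_conjSqrt hN'.nonneg, mul_div_cancel_left₀ _ hN.det_pos.ne']
  calc M = conjSqrt N A := hM.symm
    _ ≤ conjSqrt N (A.det • 1) := conjSqrt_le_conjSqrt (le_det_smul_one_of_one_le h1)
    _ = (M.det / N.det) • N := by rw [map_smul, conjSqrt_one N hN'.nonneg, hdet]

end Matrix

theorem stmt_0_general {k : ℕ} (M N : Matrix (Fin k) (Fin k) ℝ)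
    (hMN : (M - N).PosDef) (hN : N.PosDef) (v : Fin k → ℝ) :
    (v ⬝ᵥ M.mulVec v) / (v ⬝ᵥ N.mulVec v) ≤ M.det / N.det := by
  have hM : M.PosDef := by simpa using hMN.add hN
  have hquad := dotProduct_mulVec_le_of_le (le_det_div_det_smul_of_le hN hMN.posSemidef) v
  rw [smul_mulVec, dotProduct_smul, smul_eq_mul] at hquad
  exact div_le_of_le_mul₀ (by simpa using hN.posSemidef.dotProduct_mulVec_nonneg v)
    (div_nonneg hM.det_pos.le hN.det_pos.le) hquad

theorem stmt_0 {k : ℕ} (M N : Matrix (Fin k) (Fin k) ℝ)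
    (hMN : (M - N).PosDef) (hN : N.PosDef) (v : Fin k → ℝ) (hv : v ≠ 0) :
    (v ⬝ᵥ M.mulVec v) / (v ⬝ᵥ N.mulVec v) ≤ M.det / N.det :=
  stmt_0_general M N hMN hN v
end

section
/- Let M be a positive semidefinite matrix, Φ a matrix, and v a vector with vᵀ(ΦᵀΦ)⁻¹v ≥ β, where ΦᵀΦ is positive definite. For any vector Δ, if Δᵀ(ΦᵀΦ)⁻¹Δ ≤ (β/2)(3 − 2√2), then (v − Δ)ᵀ(ΦᵀΦ)⁻¹(v − Δ) ≥ β/2. -/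
/-!
Writing the positive semidefinite matrix `(ΦᵀΦ)⁻¹` as `BᵀB`, the quadratic form becomes
`x ↦ ‖B x‖²`, so its square root is a seminorm. With `s = √(β/2)` the hypotheses read
`‖B v‖ ≥ √2 s` and `‖B Δ‖ ≤ (√2 - 1) s` (as `3 - 2√2 = (√2 - 1)²`), and the reverse triangle
inequality gives `‖B (v - Δ)‖ ≥ s`.
-/

open Matrix

open scoped MatrixOrder in
theorem Matrix.PosSemidef.exists_dotProduct_mulVec_eq_norm_sq {n : Type*} [Fintype n]
    {A : Matrix n n ℝ} (hA : A.PosSemidef) :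
    ∃ B : Matrix n n ℝ, ∀ x : n → ℝ, x ⬝ᵥ A *ᵥ x = ‖WithLp.toLp 2 (B *ᵥ x)‖ ^ 2 := by
  classical
  obtain ⟨B, rfl⟩ := CStarAlgebra.nonneg_iff_eq_star_mul_self.mp hA.nonneg
  refine ⟨B, fun x => ?_⟩
  rw [EuclideanSpace.real_norm_sq_eq, ← mulVec_mulVec, dotProduct_mulVec, star_eq_conjTranspose,
    conjTranspose_eq_transpose_of_trivial, vecMul_transpose]
  simp only [dotProduct, sq]

theorem div_two_le_norm_sub_sq {E : Type*} [SeminormedAddCommGroup E] {β : ℝ} {u w : E}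
    (hu : β ≤ ‖u‖ ^ 2) (hw : ‖w‖ ^ 2 ≤ β / 2 * (3 - 2 * √2)) : β / 2 ≤ ‖u - w‖ ^ 2 := by
  have hr2 : √2 ^ 2 = 2 := Real.sq_sqrt zero_le_two
  have hβ : 0 ≤ β := by
    have : 0 < 3 - 2 * √2 := by linarith [Real.sqrt_two_lt_three_halves]
    nlinarith [sq_nonneg ‖w‖]
  set s := √(β / 2)
  have hs : 0 ≤ s := Real.sqrt_nonneg _
  have hs2 : s ^ 2 = β / 2 := Real.sq_sqrt (by positivity)
  have hu' : √2 * s ≤ ‖u‖ :=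
    (sq_le_sq₀ (by positivity) (norm_nonneg u)).1 (by rw [mul_pow, hr2, hs2]; linarith)
  have hw' : ‖w‖ ≤ (√2 - 1) * s :=
    (sq_le_sq₀ (norm_nonneg w) (mul_nonneg (by linarith [Real.one_lt_sqrt_two]) hs)).1
      (by rw [mul_pow, hs2, sub_sq, hr2]; linarith)
  have hs_le : s ≤ ‖u - w‖ := by linarith [norm_sub_norm_le u w]
  simpa only [hs2] using pow_le_pow_left₀ hs hs_le 2

theorem stmt_4_general {T k : ℕ} (Φ : Matrix (Fin T) (Fin k) ℝ)
    (hΦ : (Φᵀ * Φ).PosDef) (β : ℝ) (v Δ : Fin k → ℝ)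
    (hv : β ≤ v ⬝ᵥ (Φᵀ * Φ)⁻¹.mulVec v)
    (hΔ : Δ ⬝ᵥ (Φᵀ * Φ)⁻¹.mulVec Δ ≤ β / 2 * (3 - 2 * Real.sqrt 2)) :
    β / 2 ≤ (v - Δ) ⬝ᵥ (Φᵀ * Φ)⁻¹.mulVec (v - Δ) := by
  obtain ⟨B, hB⟩ := hΦ.inv.posSemidef.exists_dotProduct_mulVec_eq_norm_sq
  rw [hB] at hv hΔ ⊢
  rw [mulVec_sub, WithLp.toLp_sub]
  exact div_two_le_norm_sub_sq hv hΔ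

theorem stmt_4 {T k : ℕ} (Φ : Matrix (Fin T) (Fin k) ℝ)
    (hΦ : (Φᵀ * Φ).PosDef) (β : ℝ) (hβ : 0 < β) (v Δ : Fin k → ℝ)
    (hv : β ≤ v ⬝ᵥ (Φᵀ * Φ)⁻¹.mulVec v)
    (hΔ : Δ ⬝ᵥ (Φᵀ * Φ)⁻¹.mulVec Δ ≤ β / 2 * (3 - 2 * Real.sqrt 2)) :
    β / 2 ≤ (v - Δ) ⬝ᵥ (Φᵀ * Φ)⁻¹.mulVec (v - Δ) :=
  stmt_4_general Φ hΦ β v Δ hv hΔ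
end

section
/- Let M₀ be a positive definite k×k matrix with λ_min(M₀) = λ, and let (v_t)_{t≥1} be a sequence of vectors in ℝ^k with ‖v_t‖ ≤ b for all t. Let β > 0. Then the number of indices t ≥ 0 for which v_{t+1}ᵀ(M₀ + ∑_{i=1}^t v_i v_iᵀ)⁻¹ v_{t+1} ≥ β is at most ⌈(2k·log(2k b²/(λ·log(1+β))))/log(1+β)⌉. -/
/-!
Let `S` be the set of rounds whose potential is at least `β` and
`W = M₀ + ∑_{t ∈ S} v_{t+1} v_{t+1}ᵀ`. Dropping the other rounds only shrinks the Gram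
matrices, and `A ↦ wᵀA⁻¹w` is antitone in the Loewner order, so each round of `S` still has
potential at least `β` relative to the earlier rounds of `S`; by the matrix determinant lemma
`det W ≥ (1 + β)^|S| det M₀`. On the other hand `W ≤ (1 + |S| b² / λ) M₀` in the Loewner order
and `det` is Loewner-monotone, so `(1 + β)^|S| ≤ (1 + |S| b² / λ)^k`, and an elementary estimate
on logarithms finishes.
-/

open Matrix Finset
open scoped MatrixOrder

namespace Matrix

variable {n ι : Type*} {A B : Matrix n n ℝ}

lemma PosDef.of_le (hA : A.PosDef) (hAB : A ≤ B) : B.PosDef := by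
  simpa using hA.add_posSemidef hAB

variable [Fintype n]

lemma posSemidef_vecMulVec_self (w : n → ℝ) : (vecMulVec w w).PosSemidef := by
  simpa using posSemidef_vecMulVec_self_star w

lemma dotProduct_mulVec_nonneg_of_posSemidef (hA : A.PosSemidef) (x : n → ℝ) :
    0 ≤ x ⬝ᵥ A *ᵥ x := by
  simpa using hA.dotProduct_mulVec_nonneg x

lemma dotProduct_mulVec_comm (hA : A.IsHermitian) (x y : n → ℝ) :
    x ⬝ᵥ A *ᵥ y = y ⬝ᵥ A *ᵥ x := by
  rw [dotProduct_mulVec, ← vecMul_transpose, ← conjTranspose_eq_transpose_of_trivial, hA.eq,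
    dotProduct_comm]

def regGram (A : Matrix n n ℝ) (w : ι → n → ℝ) (s : Finset ι) : Matrix n n ℝ :=
  A + ∑ i ∈ s, vecMulVec (w i) (w i)

lemma PosDef.regGram (hA : A.PosDef) (w : ι → n → ℝ) (s : Finset ι) :
    (regGram A w s).PosDef :=
  hA.add_posSemidef (posSemidef_sum s fun i _ => posSemidef_vecMulVec_self (w i))

lemma regGram_mono {w : ι → n → ℝ} {s t : Finset ι} (h : s ⊆ t) :
    regGram A w s ≤ regGram A w t := by
  unfold regGram
  gcongr
  exact fun i _ _ => (posSemidef_vecMulVec_self (w i)).nonneg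

variable [DecidableEq n]

lemma vecMulVec_self_le_smul_one (w : n → ℝ) :
    vecMulVec w w ≤ (w ⬝ᵥ w) • (1 : Matrix n n ℝ) := by
  refine PosSemidef.of_dotProduct_mulVec_nonneg
    ((isHermitian_one.smul (.all _)).sub (posSemidef_vecMulVec_self w).isHermitian) fun x => ?_
  have hCS : (w ⬝ᵥ x) * (w ⬝ᵥ x) ≤ (w ⬝ᵥ w) * (x ⬝ᵥ x) := by
    simpa [dotProduct, sq] using sum_mul_sq_le_sq_mul_sq univ w x
  rw [star_trivial, sub_mulVec, smul_mulVec, one_mulVec, dotProduct_sub, dotProduct_smul,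
    vecMulVec_mulVec, op_smul_eq_smul, dotProduct_smul, smul_eq_mul, smul_eq_mul,
    dotProduct_comm x w]
  linarith

theorem det_add_vecMulVec {α : Type*} [CommRing α] {A : Matrix n n α} (hA : IsUnit A.det)
    (u v : n → α) : (A + vecMulVec u v).det = A.det * (1 + v ⬝ᵥ A⁻¹ *ᵥ u) := by
  rw [vecMulVec_eq Unit, det_add_replicateCol_mul_replicateRow hA, det_unique (n := Unit)]
  simp only [add_apply, one_apply_eq, Matrix.mul_apply, replicateRow_apply, replicateCol_apply,
    dotProduct, mulVec, Finset.sum_mul, Finset.mul_sum, mul_assoc]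
  rw [Finset.sum_comm]

lemma mulVec_inv_mulVec (hA : A.PosDef) (w : n → ℝ) : A *ᵥ A⁻¹ *ᵥ w = w := by
  rw [mulVec_mulVec, mul_nonsing_inv _ hA.det_pos.ne'.isUnit, one_mulVec]

lemma two_mul_dotProduct_sub_le (hA : A.PosDef) (y w : n → ℝ) :
    2 * (y ⬝ᵥ w) - y ⬝ᵥ A *ᵥ y ≤ w ⬝ᵥ A⁻¹ *ᵥ w := by
  have := dotProduct_mulVec_nonneg_of_posSemidef hA.posSemidef (y - A⁻¹ *ᵥ w)
  rw [sub_dotProduct, mulVec_sub, dotProduct_sub, dotProduct_sub,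
    dotProduct_mulVec_comm hA.isHermitian (A⁻¹ *ᵥ w) y, mulVec_inv_mulVec hA,
    dotProduct_comm (A⁻¹ *ᵥ w) w] at this
  linarith

lemma dotProduct_inv_mulVec_le_of_le (hA : A.PosDef) (hAB : A ≤ B) (w : n → ℝ) :
    w ⬝ᵥ B⁻¹ *ᵥ w ≤ w ⬝ᵥ A⁻¹ *ᵥ w := by
  have hBy := mulVec_inv_mulVec (hA.of_le hAB) w
  set y := B⁻¹ *ᵥ w
  have hyAy : y ⬝ᵥ A *ᵥ y ≤ y ⬝ᵥ w := by
    have := dotProduct_mulVec_nonneg_of_posSemidef hAB y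
    rw [sub_mulVec, dotProduct_sub, hBy] at this
    linarith
  rw [dotProduct_comm]
  linarith [two_mul_dotProduct_sub_le hA y w]

lemma det_regGram_insert [DecidableEq ι] (hA : A.PosDef) (w : ι → n → ℝ) {s : Finset ι}
    {i : ι} (hi : i ∉ s) : (regGram A w (insert i s)).det
      = (regGram A w s).det * (1 + w i ⬝ᵥ (regGram A w s)⁻¹ *ᵥ w i) := by
  rw [← det_add_vecMulVec (hA.regGram w s).det_pos.ne'.isUnit, regGram, regGram,
    sum_insert hi, add_comm (vecMulVec _ _), add_assoc]

theorem det_mul_pow_card_le_det_regGram [LinearOrder ι] (hA : A.PosDef) (w : ι → n → ℝ)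
    {β : ℝ} (hβ : 0 ≤ β) (s : Finset ι)
    (hs : ∀ t ∈ s, β ≤ w t ⬝ᵥ (regGram A w {i ∈ s | i < t})⁻¹ *ᵥ w t) :
    A.det * (1 + β) ^ #s ≤ (regGram A w s).det := by
  induction s using Finset.induction_on_max with
  | empty => simp [regGram]
  | insert a s hlt ih =>
    have ha : a ∉ s := fun h => lt_irrefl a (hlt a h)
    have hbelow_a : {i ∈ insert a s | i < a} = s := by
      ext i; simp only [mem_filter, mem_insert]
      exact ⟨fun ⟨h, hi⟩ => h.resolve_left hi.ne, fun h => ⟨.inr h, hlt i h⟩⟩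
    have hbelow : ∀ t ∈ s, {i ∈ insert a s | i < t} = {i ∈ s | i < t} := fun t ht => by
      rw [filter_insert, if_neg (hlt t ht).not_gt]
    have ih' := ih fun t ht => hbelow t ht ▸ hs t (mem_insert_of_mem ht)
    have hpot : β ≤ w a ⬝ᵥ (regGram A w s)⁻¹ *ᵥ w a :=
      hbelow_a ▸ hs a (mem_insert_self a s)
    rw [det_regGram_insert hA w ha, card_insert_of_notMem ha, pow_succ, ← mul_assoc]
    exact mul_le_mul ih' (by linarith) (by linarith) (hA.regGram w s).det_pos.le

theorem det_le_det_of_le (hA : A.PosDef) (hAB : A ≤ B) : A.det ≤ B.det := by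
  obtain ⟨m, w, hw⟩ := posSemidef_iff_eq_sum_vecMulVec.mp hAB
  have hB : B = regGram A w univ := by
    rw [regGram, ← add_sub_cancel A B, hw]
    simp
  have := det_mul_pow_card_le_det_regGram hA w le_rfl univ fun t _ =>
    dotProduct_mulVec_nonneg_of_posSemidef (hA.regGram w _).inv.posSemidef _
  simpa [hB] using this

lemma smul_one_le_of_forall_dotProduct_eq_one_le (hA : A.IsHermitian) {lam : ℝ}
    (h : ∀ u : n → ℝ, u ⬝ᵥ u = 1 → lam ≤ u ⬝ᵥ A *ᵥ u) : lam • 1 ≤ A := by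
  refine PosSemidef.of_dotProduct_mulVec_nonneg (hA.sub (isHermitian_one.smul (.all _)))
    fun x => ?_
  rw [star_trivial, sub_mulVec, smul_mulVec, one_mulVec, dotProduct_sub, dotProduct_smul,
    smul_eq_mul, sub_nonneg]
  rcases eq_or_ne x 0 with rfl | hx
  · simp
  have hpos : 0 < x ⬝ᵥ x := by simpa using dotProduct_star_self_pos_iff.mpr hx
  have hr : (√(x ⬝ᵥ x))⁻¹ * (√(x ⬝ᵥ x))⁻¹ = (x ⬝ᵥ x)⁻¹ := by
    rw [← mul_inv, Real.mul_self_sqrt hpos.le]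
  have hunit := h ((√(x ⬝ᵥ x))⁻¹ • x) (by
    rw [smul_dotProduct, dotProduct_smul, smul_eq_mul, smul_eq_mul, ← mul_assoc, hr,
      inv_mul_cancel₀ hpos.ne'])
  rw [mulVec_smul, smul_dotProduct, dotProduct_smul, smul_eq_mul, smul_eq_mul, ← mul_assoc, hr,
    ← div_eq_inv_mul, le_div_iff₀ hpos] at hunit
  exact hunit

lemma regGram_le_smul {lam c : ℝ} (hlam : 0 < lam) (hA : lam • 1 ≤ A) {w : ι → n → ℝ}
    {s : Finset ι} (hw : ∀ i ∈ s, w i ⬝ᵥ w i ≤ c) :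
    regGram A w s ≤ (1 + #s * (c / lam)) • A := by
  rw [add_smul, one_smul, regGram, ← nsmul_eq_mul, smul_assoc, ← sum_const]
  gcongr with i hi
  have hc : 0 ≤ c := le_trans (by simpa using dotProduct_star_self_nonneg (w i)) (hw i hi)
  calc vecMulVec (w i) (w i)
    _ ≤ (w i ⬝ᵥ w i) • (1 : Matrix n n ℝ) := vecMulVec_self_le_smul_one _
    _ ≤ c • 1 := smul_le_smul_of_nonneg_right (hw i hi) PosSemidef.one.nonneg
    _ = (c / lam) • lam • 1 := by rw [smul_smul, div_mul_cancel₀ _ hlam.ne']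
    _ ≤ (c / lam) • A := smul_le_smul_of_nonneg_left hA (div_nonneg hc hlam.le)

end Matrix

/-- With `c = 2Ka/L`, the tangent bound `log x ≤ log c + x / c - 1` turns the hypothesis into
`mL ≤ K log c + mL/2`. -/
lemma le_ceil_of_mul_le_mul_log {K a L : ℝ} (hK : 0 ≤ K) (ha : 0 ≤ a) (hL : 0 < L) {m : ℕ}
    (h : m * L ≤ K * Real.log (1 + m * a)) :
    m ≤ ⌈2 * K * Real.log (2 * K * a / L) / L⌉₊ := by
  have hlog_le : Real.log (1 + m * a) ≤ m * a := by
    linarith [Real.log_le_sub_one_of_pos (show 0 < 1 + m * a by positivity)]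
  rcases lt_or_ge (2 * K * a) L with hsmall | hlarge
  · have : (m : ℝ) * L ≤ m * L / 2 := by
      nlinarith [mul_le_mul_of_nonneg_left hlog_le hK, m.cast_nonneg (α := ℝ)]
    have hm : (m : ℝ) ≤ 0 := by nlinarith
    simp [show m = 0 by exact_mod_cast hm.antisymm m.cast_nonneg]
  · have hKa : 0 < K * a := by nlinarith
    have hK0 : 0 < K := hK.lt_of_ne (by rintro rfl; simp at hKa)
    have ha0 : 0 < a := ha.lt_of_ne (by rintro rfl; simp at hKa)
    have hc : 0 < 2 * K * a / L := by positivity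
    have htangent := Real.log_le_sub_one_of_pos (div_pos (by positivity : 0 < 1 + m * a) hc)
    rw [Real.log_div (by positivity) hc.ne'] at htangent
    have hK_tangent : K * ((1 + m * a) / (2 * K * a / L)) = L / (2 * a) + m * L / 2 := by
      field_simp
    have hLa : L / (2 * a) ≤ K := by
      rw [div_le_iff₀ (by positivity)]; linarith
    have hm : (m : ℝ) ≤ 2 * K * Real.log (2 * K * a / L) / L := by
      rw [le_div_iff₀ hL]
      nlinarith [mul_le_mul_of_nonneg_left htangent hK]
    exact_mod_cast hm.trans (Nat.le_ceil _)

open Classical in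
theorem stmt_9_general {k : ℕ} (M₀ : Matrix (Fin k) (Fin k) ℝ) (hM₀ : M₀.PosDef)
    (lam : ℝ) (hlam_pos : 0 < lam)
    (hlam_le : ∀ u : Fin k → ℝ, u ⬝ᵥ u = 1 → lam ≤ u ⬝ᵥ M₀.mulVec u)
    (b : ℝ) (v : ℕ → (Fin k → ℝ)) (hv : ∀ t, Real.sqrt (v t ⬝ᵥ v t) ≤ b)
    (β : ℝ) (hβ : 0 < β) (T : ℕ) :
    ((Finset.range T).filter (fun t =>
        β ≤ v (t + 1) ⬝ᵥ (M₀ + ∑ i ∈ Finset.Icc 1 t, vecMulVec (v i) (v i))⁻¹.mulVec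
              (v (t + 1)))).card
      ≤ ⌈2 * k * Real.log (2 * k * b ^ 2 / (lam * Real.log (1 + β)))
          / Real.log (1 + β)⌉₊ := by
  set w : ℕ → Fin k → ℝ := fun t => v (t + 1)
  have hV (t : ℕ) :
      M₀ + ∑ i ∈ Icc 1 t, vecMulVec (v i) (v i) = regGram M₀ w (range t) := by
    rw [regGram, range_eq_Ico, sum_Ico_add' (fun i => vecMulVec (v i) (v i)), zero_add,
      Ico_add_one_right_eq_Icc]
  simp_rw [hV]
  set S := {t ∈ range T | β ≤ w t ⬝ᵥ (regGram M₀ w (range t))⁻¹ *ᵥ w t}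
  have hbad : ∀ t ∈ S, β ≤ w t ⬝ᵥ (regGram M₀ w {s ∈ S | s < t})⁻¹ *ᵥ w t :=
    fun t ht => (mem_filter.mp ht).2.trans <| dotProduct_inv_mulVec_le_of_le (hM₀.regGram w _)
      (regGram_mono fun s hs => mem_range.mpr (mem_filter.mp hs).2) _
  have hdet : M₀.det * (1 + β) ^ #S ≤ M₀.det * (1 + #S * (b ^ 2 / lam)) ^ k := by
    refine (det_mul_pow_card_le_det_regGram hM₀ w hβ.le S hbad).trans ?_
    refine (det_le_det_of_le (hM₀.regGram w S) (regGram_le_smul hlam_pos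
      (smul_one_le_of_forall_dotProduct_eq_one_le hM₀.isHermitian hlam_le)
      fun t _ => (Real.sqrt_le_iff.mp (hv (t + 1))).2)).trans_eq ?_
    rw [det_smul, Fintype.card_fin, mul_comm]
  have hlog : (#S : ℝ) * Real.log (1 + β) ≤ k * Real.log (1 + #S * (b ^ 2 / lam)) := by
    rw [← Real.log_pow, ← Real.log_pow]
    exact Real.log_le_log (by positivity) (le_of_mul_le_mul_left hdet hM₀.det_pos)
  convert le_ceil_of_mul_le_mul_log k.cast_nonneg (by positivity) (Real.log_pos (by linarith))
    hlog using 5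
  ring

open Classical in
/-- Proposition 2 (elliptic potential counting). `lam` is the minimum
eigenvalue of `M₀`, expressed via the quadratic form over unit vectors. -/
theorem stmt_9 {k : ℕ} (M₀ : Matrix (Fin k) (Fin k) ℝ) (hM₀ : M₀.PosDef)
    (lam : ℝ) (hlam_pos : 0 < lam)
    (hlam_le : ∀ u : Fin k → ℝ, u ⬝ᵥ u = 1 → lam ≤ u ⬝ᵥ M₀.mulVec u)
    (hlam_eq : ∃ u : Fin k → ℝ, u ⬝ᵥ u = 1 ∧ u ⬝ᵥ M₀.mulVec u = lam)
    (b : ℝ) (v : ℕ → (Fin k → ℝ)) (hv : ∀ t, Real.sqrt (v t ⬝ᵥ v t) ≤ b)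
    (β : ℝ) (hβ : 0 < β) (T : ℕ) :
    ((Finset.range T).filter (fun t =>
        β ≤ v (t + 1) ⬝ᵥ (M₀ + ∑ i ∈ Finset.Icc 1 t, vecMulVec (v i) (v i))⁻¹.mulVec
              (v (t + 1)))).card
      ≤ ⌈2 * k * Real.log (2 * k * b ^ 2 / (lam * Real.log (1 + β)))
          / Real.log (1 + β)⌉₊ :=
  stmt_9_general M₀ hM₀ lam hlam_pos hlam_le b v hv β hβ T
end
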